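/- The kernel Q(s,t) := 2[ (s+t) log(s+t) − s log s − t log t ] on [0,∞) × [0,∞), with the convention x log x = 0 at x = 0, is positive semidefinite: for every n ∈ ℕ, all x_1,…,x_n ≥ 0 and all real numbers y_1,…,y_n, Σ_{i=1}^n Σ_{j=1}^n y_i y_j Q(x_i, x_j) ≥ 0. -/

import Mathlib

open MeasureTheory Real

/-- The kernel `Q(s,t) = 2[(s+t) log(s+t) - s log s - t log t]`; the convention
`x * log x = 0` at `x = 0` is automatic since `Real.log 0 = 0`. -/
noncomputable def Q (s t : ℝ) : ℝ :=
  2 * ((s + t) * Real.log (s + t) - s * Real.log s - t * Real.log t)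

open Set Function
open scoped Interval

/- Basic exponential facts -/
lemma one_sub_exp_nonneg {c u : ℝ} (hc : 0 ≤ c) (hu : 0 ≤ u) :
    0 ≤ 1 - Real.exp (-(c * u)) := by
  have h : Real.exp (-(c * u)) ≤ Real.exp 0 := Real.exp_le_exp.2 (by nlinarith)
  simpa using h

lemma one_sub_exp_le {c u : ℝ} : 1 - Real.exp (-(c * u)) ≤ c * u := by
  nlinarith [Real.add_one_le_exp (-(c * u))]

/- The integral of exp(-(c u)) over Ioi 0 -/
lemma exp_int {c : ℝ} (hc : 0 < c) :
    ∫ u in Ioi (0 : ℝ), Real.exp (-(c * u)) = 1 / c := by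
  have h := Real.integral_rpow_mul_exp_neg_mul_Ioi (a := 1) one_pos hc
  simpa [Real.rpow_one, Real.Gamma_one] using h

lemma exp_ftc {u : ℝ} (hu : u ≠ 0) (p q : ℝ) :
    ∫ b in p..q, Real.exp (-(b * u))
      = (Real.exp (-(p * u)) - Real.exp (-(q * u))) / u := by
  have h : ∀ b ∈ [[p, q]],
      HasDerivAt (fun b : ℝ => -(Real.exp (-(b * u)) / u)) (Real.exp (-(b * u))) b := by
    intro b _
    have h1 : HasDerivAt (fun b : ℝ => -(b * u)) (-u) b := (hasDerivAt_mul_const u).neg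
    have h2 := (h1.exp.div_const u).neg
    refine h2.congr_deriv ?_
    field_simp
  rw [intervalIntegral.integral_eq_sub_of_hasDerivAt h
    (Continuous.intervalIntegrable (by continuity) p q)]
  ring

lemma exp_ftc' {u : ℝ} (hu : 0 < u) {s : ℝ} (hs : 0 ≤ s) :
    ∫ a in Ioc (0 : ℝ) s, Real.exp (-(a * u))
      = (1 - Real.exp (-(s * u))) / u := by
  rw [← intervalIntegral.integral_of_le hs, exp_ftc hu.ne']
  norm_num

/- Frullani-type integral -/
lemma frullani {a t : ℝ} (ha : 0 < a) (ht : 0 ≤ t) :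
    ∫ u in Ioi (0 : ℝ), (Real.exp (-(a * u)) - Real.exp (-((a + t) * u))) / u
      = Real.log (a + t) - Real.log a := by
  have hle : a ≤ a + t := by linarith
  set F : ℝ → ℝ → ℝ := fun u b => Real.exp (-(b * u)) with hF
  have hmes : AEStronglyMeasurable (uncurry F)
      ((volume.restrict (Ioi (0 : ℝ))).prod (volume.restrict (Ioc a (a + t)))) := by
    apply Continuous.aestronglyMeasurable
    exact Real.continuous_exp.comp (continuous_snd.mul continuous_fst).neg
  have hg : Integrable (fun u : ℝ => Real.exp (-(a * u)) * t)
      (volume.restrict (Ioi (0 : ℝ))) := by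
    have h0 : IntegrableOn (fun u : ℝ => Real.exp (-a * u)) (Ioi (0 : ℝ)) :=
      exp_neg_integrableOn_Ioi 0 ha
    simpa [neg_mul] using h0.mul_const t
  have hInt : Integrable (uncurry F)
      ((volume.restrict (Ioi (0 : ℝ))).prod (volume.restrict (Ioc a (a + t)))) := by
    rw [MeasureTheory.integrable_prod_iff hmes]
    constructor
    · filter_upwards with u
      exact Continuous.integrableOn_Ioc (by continuity)
    · apply hg.mono hmes.norm.integral_prod_right'
      rw [ae_restrict_iff' measurableSet_Ioi]
      filter_upwards with u hu
      have hu' : (0 : ℝ) < u := hu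
      have hb : ∀ b ∈ Ioc a (a + t), ‖‖F u b‖‖ ≤ Real.exp (-(a * u)) := by
        intro b hb
        have : Real.exp (-(b * u)) ≤ Real.exp (-(a * u)) := by
          apply Real.exp_le_exp.2
          nlinarith [hb.1]
        simpa [hF, abs_of_nonneg (Real.exp_nonneg _)] using this
      have := MeasureTheory.norm_setIntegral_le_of_norm_le_const
        (μ := volume) (C := Real.exp (-(a * u))) (s := Ioc a (a + t))
        (f := fun b => ‖F u b‖) (by exact measure_Ioc_lt_top) hb
      calc ‖∫ b in Ioc a (a + t), ‖F u b‖‖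
          ≤ Real.exp (-(a * u)) * (volume (Ioc a (a + t))).toReal := this
        _ = Real.exp (-(a * u)) * t := by
            rw [Real.volume_Ioc, ENNReal.toReal_ofReal (by linarith)]
            ring_nf
        _ ≤ ‖Real.exp (-(a * u)) * t‖ := le_abs_self _
  have swap := MeasureTheory.integral_integral_swap hInt
  have h1 : EqOn (fun u : ℝ => (Real.exp (-(a * u)) - Real.exp (-((a + t) * u))) / u)
      (fun u : ℝ => ∫ b in Ioc a (a + t), F u b) (Ioi 0) := by
    intro u hu
    have hu' : (0 : ℝ) < u := hu
    simp only
    rw [← intervalIntegral.integral_of_le hle, exp_ftc hu'.ne']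
  rw [setIntegral_congr_fun measurableSet_Ioi h1]
  rw [swap]
  have h2 : EqOn (fun b : ℝ => ∫ u in Ioi (0 : ℝ), F u b)
      (fun b : ℝ => 1 / b) (Ioc a (a + t)) := by
    intro b hb
    exact exp_int (lt_trans ha hb.1)
  rw [setIntegral_congr_fun measurableSet_Ioc h2]
  rw [← intervalIntegral.integral_of_le hle,
    integral_one_div (notMem_uIcc_of_lt ha (by linarith)),
    Real.log_div (by linarith) ha.ne']

/- Integrability of the master integrand -/
lemma master_int {s t : ℝ} (hs : 0 ≤ s) (ht : 0 ≤ t) :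
    IntegrableOn
      (fun u : ℝ => (1 - Real.exp (-(s * u))) * (1 - Real.exp (-(t * u))) / u ^ 2)
      (Ioi (0 : ℝ)) := by
  have hmeas : Measurable
      (fun u : ℝ => (1 - Real.exp (-(s * u))) * (1 - Real.exp (-(t * u))) / u ^ 2) := by
    fun_prop
  rw [← Ioc_union_Ioi_eq_Ioi (zero_le_one (α := ℝ))]
  apply IntegrableOn.union
  · apply Measure.integrableOn_of_bounded (M := s * t)
    · exact (measure_Ioc_lt_top (a := (0:ℝ)) (b := 1) (μ := volume)).ne
    · exact hmeas.aestronglyMeasurable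
    · rw [ae_restrict_iff' measurableSet_Ioc]
      filter_upwards with u hu
      have hu0 : (0 : ℝ) < u := hu.1
      have e1 : 0 ≤ 1 - Real.exp (-(s * u)) := one_sub_exp_nonneg hs hu0.le
      have e2 : 0 ≤ 1 - Real.exp (-(t * u)) := one_sub_exp_nonneg ht hu0.le
      have e3 : 1 - Real.exp (-(s * u)) ≤ s * u := one_sub_exp_le
      have e4 : 1 - Real.exp (-(t * u)) ≤ t * u := one_sub_exp_le
      rw [Real.norm_of_nonneg (by positivity)]
      rw [div_le_iff₀ (by positivity : (0:ℝ) < u ^ 2)]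
      nlinarith
  · apply Integrable.mono
      (integrableOn_Ioi_rpow_of_lt (show (-2 : ℝ) < -1 by norm_num) one_pos)
      hmeas.aestronglyMeasurable
    rw [ae_restrict_iff' measurableSet_Ioi]
    filter_upwards with u hu
    have hu1 : (1 : ℝ) < u := hu
    have hu0 : (0 : ℝ) < u := by linarith
    have e1 : 0 ≤ 1 - Real.exp (-(s * u)) := one_sub_exp_nonneg hs hu0.le
    have e2 : 0 ≤ 1 - Real.exp (-(t * u)) := one_sub_exp_nonneg ht hu0.le
    have e3 : 1 - Real.exp (-(s * u)) ≤ 1 := by nlinarith [Real.exp_nonneg (-(s * u))]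
    have e4 : 1 - Real.exp (-(t * u)) ≤ 1 := by nlinarith [Real.exp_nonneg (-(t * u))]
    have hrp : u ^ (-2 : ℝ) = 1 / u ^ 2 := by
      rw [Real.rpow_neg hu0.le, one_div]
      congr 1
      rw [show ((2:ℝ)) = ((2:ℕ):ℝ) by norm_num, Real.rpow_natCast]
    rw [Real.norm_of_nonneg (by positivity), Real.norm_of_nonneg (by positivity), hrp]
    rw [div_le_div_iff₀ (by positivity) (by positivity)]
    have h5 : (1 - Real.exp (-(s * u))) * (1 - Real.exp (-(t * u))) ≤ 1 := by nlinarith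
    nlinarith [sq_nonneg u]

/- The double-integral representation -/
lemma repD {s t : ℝ} (hs : 0 ≤ s) (ht : 0 ≤ t) :
    ∫ u in Ioi (0 : ℝ), (1 - Real.exp (-(s * u))) * (1 - Real.exp (-(t * u))) / u ^ 2
      = ∫ a in Ioc (0 : ℝ) s, (Real.log (a + t) - Real.log a) := by
  set F : ℝ → ℝ → ℝ :=
    fun u a => Real.exp (-(a * u)) * ((1 - Real.exp (-(t * u))) / u) with hF
  have hmes : AEStronglyMeasurable (uncurry F)
      ((volume.restrict (Ioi (0 : ℝ))).prod (volume.restrict (Ioc 0 s))) := by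
    apply Measurable.aestronglyMeasurable
    fun_prop
  have hkey : ∀ u : ℝ, 0 < u →
      (∫ a in Ioc (0 : ℝ) s, F u a)
        = (1 - Real.exp (-(s * u))) * (1 - Real.exp (-(t * u))) / u ^ 2 := by
    intro u hu
    rw [show (fun a => F u a) = fun a => Real.exp (-(a * u)) * ((1 - Real.exp (-(t * u))) / u)
        from rfl]
    rw [integral_mul_const, exp_ftc' hu hs, div_mul_div_comm, ← sq]
  have hInt : Integrable (uncurry F)
      ((volume.restrict (Ioi (0 : ℝ))).prod (volume.restrict (Ioc 0 s))) := by
    rw [MeasureTheory.integrable_prod_iff hmes]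
    constructor
    · filter_upwards with u
      exact Continuous.integrableOn_Ioc (by continuity)
    · apply (master_int hs ht).congr
      refine Filter.eventuallyEq_of_mem (self_mem_ae_restrict measurableSet_Ioi) ?_
      intro u hu
      have hu' : (0 : ℝ) < u := hu
      have hnorm : EqOn (fun a : ℝ => ‖uncurry F (u, a)‖) (fun a : ℝ => F u a)
          (Ioc (0:ℝ) s) := by
        intro a ha
        simp only [Function.uncurry_apply_pair]
        apply Real.norm_of_nonneg
        have := one_sub_exp_nonneg ht hu'.le
        positivity
      simp only
      rw [setIntegral_congr_fun measurableSet_Ioc hnorm, hkey u hu']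
  have swap := MeasureTheory.integral_integral_swap hInt
  have h1 : EqOn
      (fun u : ℝ => (1 - Real.exp (-(s * u))) * (1 - Real.exp (-(t * u))) / u ^ 2)
      (fun u : ℝ => ∫ a in Ioc (0 : ℝ) s, F u a) (Ioi 0) :=
    fun u hu => (hkey u hu).symm
  rw [setIntegral_congr_fun measurableSet_Ioi h1, swap]
  apply setIntegral_congr_fun measurableSet_Ioc
  intro a ha
  have ha0 : (0 : ℝ) < a := ha.1
  have hptw : EqOn (fun u : ℝ => F u a)
      (fun u : ℝ => (Real.exp (-(a * u)) - Real.exp (-((a + t) * u))) / u) (Ioi 0) := by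
    intro u hu
    simp only [hF]
    rw [show (-((a + t) * u)) = -(a * u) + -(t * u) by ring, Real.exp_add]
    ring
  simp only
  rw [setIntegral_congr_fun measurableSet_Ioi hptw, frullani ha0 ht]

/- Integrability of log near 0 -/
lemma log_II {r : ℝ} (hr : 0 ≤ r) : IntervalIntegrable Real.log volume 0 r := by
  rw [intervalIntegrable_iff_integrableOn_Ioc_of_le hr]
  apply Integrable.mono (g := fun a : ℝ => 2 * a ^ (-(1:ℝ)/2) + r)
  · apply Integrable.add
    · apply Integrable.const_mul
      exact (intervalIntegral.intervalIntegrable_rpow' (by norm_num : (-1:ℝ) < -(1:ℝ)/2)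
        (a := 0) (b := r)).1
    · exact integrableOn_const (by exact measure_Ioc_lt_top.ne)
  · exact Real.measurable_log.aestronglyMeasurable
  · rw [ae_restrict_iff' measurableSet_Ioc]
    filter_upwards with a ha
    have ha0 : (0:ℝ) < a := ha.1
    have hrp : (0:ℝ) < a ^ (-(1:ℝ)/2) := Real.rpow_pos_of_pos ha0 _
    have hRHS : 0 ≤ 2 * a ^ (-(1:ℝ)/2) + r := by positivity
    rw [Real.norm_eq_abs, Real.norm_of_nonneg hRHS]
    rcases le_or_gt a 1 with h | h
    · rw [abs_of_nonpos (Real.log_nonpos ha0.le h)]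
      have h1 : Real.log (a ^ (-(1:ℝ)/2)) ≤ a ^ (-(1:ℝ)/2) :=
        (Real.log_le_sub_one_of_pos hrp).trans (by linarith)
      rw [Real.log_rpow ha0] at h1
      linarith
    · rw [abs_of_nonneg (Real.log_nonneg h.le)]
      have h1 : Real.log a ≤ a := (Real.log_le_sub_one_of_pos ha0).trans (by linarith)
      have h2 : a ≤ r := ha.2
      linarith

/- Computation of the interval integral of log(a+t) - log a -/
lemma repC {s t : ℝ} (hs : 0 ≤ s) (ht : 0 ≤ t) :
    ∫ a in Ioc (0:ℝ) s, (Real.log (a + t) - Real.log a)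
      = (s + t) * Real.log (s + t) - s * Real.log s - t * Real.log t := by
  rw [← intervalIntegral.integral_of_le hs]
  have hint : IntervalIntegrable (fun a => Real.log (a + t) - Real.log a) volume 0 s := by
    apply IntervalIntegrable.sub
    · have h1 : IntervalIntegrable Real.log volume t (s + t) := by
        apply (log_II (by linarith : (0:ℝ) ≤ s + t)).mono_set
        rw [uIcc_of_le (by linarith), uIcc_of_le (by linarith)]
        exact Icc_subset_Icc (by linarith) le_rfl
      have h2 := h1.comp_add_right t
      simpa using h2
    · exact log_II hs
  have hcont : ContinuousOn
      (fun a : ℝ => (a + t) * Real.log (a + t) - a * Real.log a) (Icc 0 s) := by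
    apply Continuous.continuousOn
    exact (Real.continuous_mul_log.comp (continuous_id.add continuous_const)).sub
      Real.continuous_mul_log
  have hderiv : ∀ a ∈ Ioo 0 s,
      HasDerivAt (fun a : ℝ => (a + t) * Real.log (a + t) - a * Real.log a)
        (Real.log (a + t) - Real.log a) a := by
    intro a ha
    have hat : a + t ≠ 0 := by nlinarith [ha.1]
    have h1 : HasDerivAt (fun a : ℝ => (a + t) * Real.log (a + t))
        (Real.log (a + t) + 1) a := by
      have h0 := Real.hasDerivAt_mul_log hat
      have := h0.comp a ((hasDerivAt_id a).add_const t)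
      exact this.congr_deriv (mul_one _)
    have h2 := Real.hasDerivAt_mul_log (ne_of_gt ha.1)
    have := h1.sub h2
    refine this.congr_deriv ?_
    ring
  rw [intervalIntegral.integral_eq_sub_of_hasDerivAt_of_le hs hcont hderiv hint]
  simp only [zero_add, zero_mul, sub_zero]

/- Kernel representation -/
lemma keyQ {s t : ℝ} (hs : 0 ≤ s) (ht : 0 ≤ t) :
    Q s t = 2 * ∫ u in Ioi (0:ℝ),
      (1 - Real.exp (-(s * u))) * (1 - Real.exp (-(t * u))) / u ^ 2 := by
  rw [repD hs ht, repC hs ht, Q]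

theorem stmt_3 (n : ℕ) (x : Fin n → ℝ) (y : Fin n → ℝ) (hx : ∀ i, 0 ≤ x i) :
    0 ≤ ∑ i, ∑ j, y i * y j * Q (x i) (x j) := by
  set g : Fin n → Fin n → ℝ → ℝ := fun i j u =>
    (2 * (y i * y j)) * ((1 - Real.exp (-(x i * u))) * (1 - Real.exp (-(x j * u))) / u ^ 2)
    with hg
  have hInt : ∀ i j : Fin n, IntegrableOn (g i j) (Ioi (0:ℝ)) := fun i j =>
    (master_int (hx i) (hx j)).const_mul _
  have h1 : ∀ i j : Fin n, y i * y j * Q (x i) (x j) = ∫ u in Ioi (0:ℝ), g i j u := by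
    intro i j
    rw [keyQ (hx i) (hx j), hg]
    simp only
    rw [MeasureTheory.integral_const_mul]
    ring
  calc (0:ℝ) ≤ ∫ u in Ioi (0:ℝ), ∑ i, ∑ j, g i j u := by
        apply setIntegral_nonneg measurableSet_Ioi
        intro u hu
        have key : ∑ i, ∑ j, g i j u =
            2 * ((∑ i, y i * ((1 - Real.exp (-(x i * u))) / u)) *
                 (∑ j, y j * ((1 - Real.exp (-(x j * u))) / u))) := by
          rw [Finset.sum_mul_sum, Finset.mul_sum]
          refine Finset.sum_congr rfl fun i _ => ?_
          rw [Finset.mul_sum]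
          refine Finset.sum_congr rfl fun j _ => ?_
          rw [hg]
          simp only
          ring
        rw [key]
        have := mul_self_nonneg (∑ i, y i * ((1 - Real.exp (-(x i * u))) / u))
        linarith
    _ = ∑ i, ∫ u in Ioi (0:ℝ), ∑ j, g i j u := by
        rw [MeasureTheory.integral_finset_sum]
        intro i _
        exact integrable_finset_sum _ (fun j _ => hInt i j)
    _ = ∑ i, ∑ j, ∫ u in Ioi (0:ℝ), g i j u := by
        refine Finset.sum_congr rfl fun i _ => ?_
        rw [MeasureTheory.integral_finset_sum]
        intro j _
        exact hInt i j
    _ = ∑ i, ∑ j, y i * y j * Q (x i) (x j) := by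
        refine Finset.sum_congr rfl fun i _ => Finset.sum_congr rfl fun j _ => (h1 i j).symm
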